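/- Approximate-Greedy variant: if at each arrival Greedy only achieves an η-approximation of the maximum marginal value, i.e. Σ_i f_i(ALG_t | ALG(t)) ≥ η · max_{e∈N_t} Σ_i f_i(e | ALG(t)) for all t, then the resulting algorithm is (1 + 1/η)^{−1}-competitive for OSOW with configurations. -/

import Mathlib

/-!
Fix a strict total order refining the arrival order; along it every `f i`, hence
`F = ∑ i, f i`, has the submodular-order property. Let `A_k` be the greedy picks before time `k`
and `O_k` the benchmark picks from time `k` on. The potential `F (O_k ∪ A_k) + η⁻¹ F (A_k)` is
nondecreasing in `k`: moving `o_k` from `O` into the base set loses at most its marginal value at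
`A_k` (submodular order, then monotonicity), and greedy bounds that by `η⁻¹` times its own gain.
Comparing `k = 0` with `k = n` gives `F (OPT) + η⁻¹ F ∅ ≤ (1 + η⁻¹) F (ALG)`.
-/

/-- `lt`-submodular order for a set function w.r.t. a strict order relation `lt`. -/
def SubmodOrderRel {α : Type*} [DecidableEq α] (lt : α → α → Prop) (f : Finset α → ℝ) : Prop :=
  ∀ A B C : Finset α, B ⊆ A →
    (∀ x ∈ A \ B, ∀ y ∈ B, lt y x) →
    (∀ c ∈ C, ∀ x ∈ A, lt x c) →
    f (C ∪ A) - f A ≤ f (C ∪ B) - f B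

theorem exists_isStrictTotalOrder_refining {α β : Type*} [LinearOrder β] (τ : α → β) :
    ∃ lt : α → α → Prop, IsStrictTotalOrder α lt ∧ ∀ x y, τ x < τ y → lt x y := by
  let _ : LinearOrder α := WellOrderingRel.isWellOrder.linearOrder
  let g : α ↪ β ×ₗ α := ⟨fun x => toLex (τ x, x), fun x y h => congrArg (·.2) h⟩
  exact ⟨g ⁻¹'o (· < ·), (RelEmbedding.preimage g (· < ·)).isStrictTotalOrder,
    fun x y h => Prod.Lex.toLex_lt_toLex.2 (Or.inl h)⟩

open Finset

section SubmodOrder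

variable {α : Type*} [DecidableEq α] {lt : α → α → Prop}

theorem SubmodOrderRel.sum {ι : Type*} {s : Finset ι} {f : ι → Finset α → ℝ}
    (hf : ∀ i ∈ s, SubmodOrderRel lt (f i)) :
    SubmodOrderRel lt (fun S => ∑ i ∈ s, f i S) := by
  intro A B C hBA hAB hCA
  simp only [← sum_sub_distrib]
  exact sum_le_sum fun i hi => hf i hi A B C hBA hAB hCA

theorem SubmodOrderRel.sub_insert_le {F : Finset α → ℝ} (hF : SubmodOrderRel lt F) {x : α}
    {B C : Finset α} (hBx : ∀ y ∈ B, lt y x) (hxC : ∀ c ∈ C, lt x c)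
    (hBC : ∀ c ∈ C, ∀ y ∈ B, lt y c) :
    F (C ∪ insert x B) - F (insert x B) ≤ F (C ∪ B) - F B := by
  refine hF _ _ _ (subset_insert _ _) (fun z hz y hy => ?_) fun c hc z hz => ?_
  · rw [mem_sdiff, mem_insert] at hz
    rcases hz with ⟨rfl | hzB, hz⟩
    exacts [hBx y hy, absurd hzB hz]
  · rcases mem_insert.1 hz with rfl | hzB
    exacts [hxC c hc, hBC c hc z hzB]

end SubmodOrder

section ArrivalPrefixes

variable {α : Type*} [DecidableEq α] {n : ℕ}

def imageBefore (g : Fin n → α) (k : ℕ) : Finset α :=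
  (univ.filter fun s : Fin n => (s : ℕ) < k).image g

def imageFrom (g : Fin n → α) (k : ℕ) : Finset α :=
  (univ.filter fun s : Fin n => k ≤ (s : ℕ)).image g

variable (g : Fin n → α)

theorem mem_imageBefore {g : Fin n → α} {k : ℕ} {x : α} :
    x ∈ imageBefore g k ↔ ∃ s : Fin n, (s : ℕ) < k ∧ g s = x := by
  simp [imageBefore]

theorem mem_imageFrom {g : Fin n → α} {k : ℕ} {x : α} :
    x ∈ imageFrom g k ↔ ∃ s : Fin n, k ≤ (s : ℕ) ∧ g s = x := by
  simp [imageFrom]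

@[simp] theorem imageBefore_zero : imageBefore g 0 = ∅ := by
  simp [imageBefore]

@[simp] theorem imageFrom_zero : imageFrom g 0 = univ.image g := by
  simp [imageFrom]

theorem imageBefore_of_le {k : ℕ} (hk : n ≤ k) : imageBefore g k = univ.image g := by
  simp [imageBefore, fun s : Fin n => s.isLt.trans_le hk]

theorem imageFrom_of_le {k : ℕ} (hk : n ≤ k) : imageFrom g k = ∅ := by
  simp [imageFrom, fun s : Fin n => s.isLt.trans_le hk]

theorem imageBefore_succ (t : Fin n) :
    imageBefore g (t + 1) = insert (g t) (imageBefore g t) := by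
  rw [imageBefore, imageBefore, ← image_insert]
  congr 1
  ext s
  simp only [mem_filter, mem_univ, true_and, mem_insert, Fin.ext_iff]
  omega

theorem imageFrom_eq_insert (t : Fin n) :
    imageFrom g t = insert (g t) (imageFrom g (t + 1)) := by
  rw [imageFrom, imageFrom, ← image_insert]
  congr 1
  ext s
  simp only [mem_filter, mem_univ, true_and, mem_insert, Fin.ext_iff]
  omega

end ArrivalPrefixes

section ApproxGreedy

variable {α : Type*} [DecidableEq α] {n : ℕ}

noncomputable def exchangePotential (F : Finset α → ℝ) (η : ℝ) (ALG o : Fin n → α) (k : ℕ) : ℝ :=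
  F (imageFrom o k ∪ imageBefore ALG k) + η⁻¹ * F (imageBefore ALG k)

variable {lt : α → α → Prop} {F : Finset α → ℝ} {ALG o : Fin n → α} {η : ℝ}

theorem SubmodOrderRel.exchangePotential_le_succ (hF : Monotone F) (hso : SubmodOrderRel lt F)
    (hAo : ∀ s t, s < t → lt (ALG s) (o t)) (hoo : ∀ s t, s < t → lt (o s) (o t)) (hη : 0 < η)
    (hgreedy : ∀ t : Fin n, η * (F (insert (o t) (imageBefore ALG t)) - F (imageBefore ALG t)) ≤
      F (insert (ALG t) (imageBefore ALG t)) - F (imageBefore ALG t)) (k : ℕ) :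
    exchangePotential F η ALG o k ≤ exchangePotential F η ALG o (k + 1) := by
  rw [exchangePotential, exchangePotential]
  obtain hk | hk := lt_or_ge k n
  swap
  · rw [imageFrom_of_le o hk, imageFrom_of_le o (hk.trans k.le_succ), imageBefore_of_le ALG hk,
      imageBefore_of_le ALG (hk.trans k.le_succ)]
  obtain ⟨t, rfl⟩ : ∃ t : Fin n, (t : ℕ) = k := ⟨⟨k, hk⟩, rfl⟩
  set A := imageBefore ALG t
  have hexchange : F (imageFrom o t ∪ A) - F (insert (o t) A) ≤
      F (imageFrom o (t + 1) ∪ A) - F A := by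
    rw [imageFrom_eq_insert o t, insert_union, ← union_insert]
    refine hso.sub_insert_le (fun y hy => ?_) (fun c hc => ?_) fun c hc y hy => ?_
    · obtain ⟨s, hs, rfl⟩ := mem_imageBefore.1 hy
      exact hAo s t hs
    · obtain ⟨s, hs, rfl⟩ := mem_imageFrom.1 hc
      exact hoo t s hs
    · obtain ⟨s, hs, rfl⟩ := mem_imageFrom.1 hc
      obtain ⟨s', hs', rfl⟩ := mem_imageBefore.1 hy
      exact hAo s' s (Fin.lt_def.2 (by omega))
  have hmono : F (imageFrom o (t + 1) ∪ A) ≤ F (imageFrom o (t + 1) ∪ imageBefore ALG (t + 1)) :=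
    hF (union_subset_union_right (imageBefore_succ ALG t ▸ subset_insert _ _))
  have hmarginal : F (insert (o t) A) - F A ≤ η⁻¹ * (F (imageBefore ALG (t + 1)) - F A) := by
    rw [le_inv_mul_iff₀ hη, imageBefore_succ]
    exact hgreedy t
  linarith

theorem SubmodOrderRel.approxGreedy_bound (hF : Monotone F) (hso : SubmodOrderRel lt F)
    (hAo : ∀ s t, s < t → lt (ALG s) (o t)) (hoo : ∀ s t, s < t → lt (o s) (o t)) (hη : 0 < η)
    (hgreedy : ∀ t : Fin n, η * (F (insert (o t) (imageBefore ALG t)) - F (imageBefore ALG t)) ≤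
      F (insert (ALG t) (imageBefore ALG t)) - F (imageBefore ALG t)) :
    F (univ.image o) + η⁻¹ * F ∅ ≤ (1 + η⁻¹) * F (univ.image ALG) := by
  have hpotential :=
    monotone_nat_of_le_succ (hso.exchangePotential_le_succ hF hAo hoo hη hgreedy) (Nat.zero_le n)
  simpa [exchangePotential, imageBefore_of_le ALG le_rfl, imageFrom_of_le o le_rfl, add_mul]
    using hpotential

end ApproxGreedy

theorem stmt_9_general {α : Type*} [Fintype α] [DecidableEq α] {ι : Type*} [Fintype ι]
    (n : ℕ) (τ : α → Fin n)
    (N : Fin n → Finset α) (hN : ∀ t, N t = Finset.univ.filter (fun e => τ e = t))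
    (f : ι → Finset α → ℝ)
    (hzero : ∀ i, f i ∅ = 0)
    (hmono : ∀ i, ∀ S₁ S₂ : Finset α, S₁ ⊆ S₂ → f i S₁ ≤ f i S₂)
    (hso : ∀ lt : α → α → Prop, IsStrictTotalOrder α lt →
      (∀ x y, τ x < τ y → lt x y) → ∀ i, SubmodOrderRel lt (f i))
    (η : ℝ) (hη0 : 0 < η)
    (ALG : Fin n → α) (hALGmem : ∀ t, ALG t ∈ N t)
    (hgreedy : ∀ t, ∀ e ∈ N t, η *
      ∑ i, (f i (insert e ((Finset.univ.filter (fun s => s < t)).image ALG)) -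
            f i ((Finset.univ.filter (fun s => s < t)).image ALG)) ≤
      ∑ i, (f i (insert (ALG t) ((Finset.univ.filter (fun s => s < t)).image ALG)) -
            f i ((Finset.univ.filter (fun s => s < t)).image ALG)))
    (o : Fin n → α) (ho : ∀ t, o t ∈ N t) :
    ∑ i, f i (Finset.univ.image ALG) ≥ (1 + 1 / η)⁻¹ * ∑ i, f i (Finset.univ.image o) := by
  obtain ⟨lt, hlt, hτlt⟩ := exists_isStrictTotalOrder_refining τ
  have harrival : ∀ g : Fin n → α, (∀ t, g t ∈ N t) → ∀ t, τ (g t) = t := fun g hg t => by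
    simpa [hN] using hg t
  have hF : SubmodOrderRel lt (fun S => ∑ i, f i S) :=
    SubmodOrderRel.sum fun i _ => hso lt hlt hτlt i
  have hbound := hF.approxGreedy_bound (ALG := ALG) (o := o)
    (fun S T hST => sum_le_sum fun i _ => hmono i S T hST)
    (fun s t hst => hτlt _ _ (by rwa [harrival ALG hALGmem, harrival o ho]))
    (fun s t hst => hτlt _ _ (by rwa [harrival o ho, harrival o ho])) hη0
    (fun t => by
      have h := hgreedy t (o t) (ho t)
      rwa [sum_sub_distrib, sum_sub_distrib] at h)
  simp only [hzero, sum_const_zero, mul_zero, add_zero] at hbound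
  rw [ge_iff_le, one_div, inv_mul_le_iff₀ (by positivity)]
  exact hbound

/-- approximate-Greedy variant. Same OSOW-with-configurations setting as
the Greedy theorem, but at each arrival the algorithm only achieves an `η`-approximation
of the maximum total marginal value (`η ∈ (0,1]`); then the algorithm is
`(1 + 1/η)⁻¹`-competitive. -/
theorem stmt_9 {α : Type*} [Fintype α] [DecidableEq α] {ι : Type*} [Fintype ι]
    (n : ℕ) (τ : α → Fin n)
    (N : Fin n → Finset α) (hN : ∀ t, N t = Finset.univ.filter (fun e => τ e = t))
    (f : ι → Finset α → ℝ)
    (hnonneg : ∀ i S, 0 ≤ f i S)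
    (hzero : ∀ i, f i ∅ = 0)
    (hmono : ∀ i, ∀ S₁ S₂ : Finset α, S₁ ⊆ S₂ → f i S₁ ≤ f i S₂)
    (hso : ∀ lt : α → α → Prop, IsStrictTotalOrder α lt →
      (∀ x y, τ x < τ y → lt x y) → ∀ i, SubmodOrderRel lt (f i))
    (hmod : ∀ i t, ∀ S : Finset α, Disjoint S (N t) →
      f i (N t ∪ S) = f i S + ∑ e ∈ N t, (f i (insert e S) - f i S))
    (η : ℝ) (hη0 : 0 < η) (hη1 : η ≤ 1)
    (ALG : Fin n → α) (hALGmem : ∀ t, ALG t ∈ N t)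
    (hgreedy : ∀ t, ∀ e ∈ N t, η *
      ∑ i, (f i (insert e ((Finset.univ.filter (fun s => s < t)).image ALG)) -
            f i ((Finset.univ.filter (fun s => s < t)).image ALG)) ≤
      ∑ i, (f i (insert (ALG t) ((Finset.univ.filter (fun s => s < t)).image ALG)) -
            f i ((Finset.univ.filter (fun s => s < t)).image ALG)))
    (o : Fin n → α) (ho : ∀ t, o t ∈ N t) :
    ∑ i, f i (Finset.univ.image ALG) ≥ (1 + 1 / η)⁻¹ * ∑ i, f i (Finset.univ.image o) :=
  stmt_9_general n τ N hN f hzero hmono hso η hη0 ALG hALGmem hgreedy o ho
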